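/- Let F be an acyclic graph (forest) on n vertices and k ≥ 2. Then α_k(F) ≥ ⌈((k−1)/k)·n⌉, i.e., the lower bound ((k−1)/k)n can be rounded up to the nearest integer. -/

import Mathlib

open SimpleGraph

/-- A set `S` is a generalized `k`-independent set in `G` if the induced subgraph `G[S]`
contains no tree on `k` vertices, equivalently every connected component of `G[S]`
has at most `k - 1` vertices. -/
def IsGenKIndep {V : Type*} (G : SimpleGraph V) (k : ℕ) (S : Set V) : Prop :=
  ∀ c : (G.induce S).ConnectedComponent, Nat.card c.supp ≤ k - 1

/-- The generalized `k`-independence number: the maximum size of a generalized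
`k`-independent set. -/
noncomputable def alphaK {V : Type*} (G : SimpleGraph V) (k : ℕ) : ℕ :=
  sSup {m | ∃ S : Set V, IsGenKIndep G k S ∧ S.ncard = m}

/-!
If `F[A]` has a component with at least `k` vertices, pick `W ⊆ A` inclusion-minimal among the
sets with `|W| ≥ k` that hang from a single vertex `v ∈ W`, i.e. no vertex of `W \ {v}` has a
neighbour in `A \ W`. Then `W \ {v}` has no component with `k` or more vertices: since `F` is
acyclic, such a component `C` contains at most one neighbour `u` of `v`, so `C` would hang from
`u` and contradict minimality. Keeping `W \ {v}` and recursing on `A \ W` discards one vertex per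
block of at least `k`, so at least `(k - 1) / k` of the vertices are kept.
-/

namespace SimpleGraph

variable {V : Type*} {G : SimpleGraph V}

namespace ConnectedComponent

variable {S : Set V} (c : (G.induce S).ConnectedComponent)

theorem image_supp_subset : Subtype.val '' c.supp ⊆ S := by
  rintro _ ⟨x, -, rfl⟩
  exact x.2

theorem ncard_image_supp : (Subtype.val '' c.supp).ncard = Nat.card c.supp := by
  rw [Set.ncard_image_of_injective _ Subtype.val_injective, Nat.card_coe_set_eq]

theorem connected_induce_image_supp : (G.induce (Subtype.val '' c.supp)).Connected :=
  c.connected_toSimpleGraph.map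
    { toFun := fun x => ⟨x.1.1, x.1, x.2, rfl⟩, map_rel' := id }
    (by rintro ⟨_, x, hx, rfl⟩; exact ⟨⟨x, hx⟩, rfl⟩)

theorem mem_image_supp_of_adj {x y : V} (hx : x ∈ Subtype.val '' c.supp) (hy : y ∈ S)
    (hxy : G.Adj x y) : y ∈ Subtype.val '' c.supp := by
  obtain ⟨x, hxc, rfl⟩ := hx
  exact ⟨⟨y, hy⟩, (c.mem_supp_congr_adj (v := x) (w := ⟨y, hy⟩) hxy).1 hxc, rfl⟩

end ConnectedComponent

theorem subset_or_subset_of_preconnected_induce {X S T : Set V}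
    (hX : (G.induce X).Preconnected) (hXST : X ⊆ S ∪ T)
    (hST : ∀ x ∈ S, ∀ y ∈ T, ¬G.Adj x y) : X ⊆ S ∨ X ⊆ T := by
  by_contra! h
  obtain ⟨a, haX, haS⟩ := Set.not_subset.1 h.1
  obtain ⟨b, hbX, hbT⟩ := Set.not_subset.1 h.2
  obtain ⟨p⟩ := hX ⟨b, hbX⟩ ⟨a, haX⟩
  obtain ⟨d, -, hd₁, hd₂⟩ := p.exists_boundary_dart {x | x.1 ∈ S}
    ((hXST hbX).resolve_right hbT) haS
  exact hST _ hd₁ _ ((hXST d.snd.2).resolve_left hd₂) d.adj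

theorem IsAcyclic.eq_of_adj_of_walk {v x y : V} (hG : G.IsAcyclic) (hx : G.Adj v x)
    (hy : G.Adj v y) (p : G.Walk x y) (hv : v ∉ p.support) : x = y := by
  classical
  have hP : (Walk.cons hx p.bypass).IsPath :=
    (Walk.cons_isPath_iff _ _).2
      ⟨p.bypass_isPath, fun h => hv (p.support_bypass_subset_support h)⟩
  simpa using (hG.eq_snd_of_adj_start hP hy (Walk.end_mem_support _)).symm

theorem IsAcyclic.eq_of_adj_of_preconnected_induce {X : Set V} {v x y : V} (hG : G.IsAcyclic)
    (hX : (G.induce X).Preconnected) (hv : v ∉ X) (hx : x ∈ X) (hy : y ∈ X)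
    (hxv : G.Adj x v) (hyv : G.Adj y v) : x = y := by
  obtain ⟨p⟩ := hX ⟨x, hx⟩ ⟨y, hy⟩
  refine hG.eq_of_adj_of_walk hxv.symm hyv.symm (p.map (Embedding.induce X).toHom) fun hvp => ?_
  obtain ⟨w, -, rfl⟩ := List.mem_map.1 ((Walk.support_map _ p) ▸ hvp)
  exact hv w.2

def IsBranch (G : SimpleGraph V) (A W : Set V) (v : V) : Prop :=
  W ⊆ A ∧ v ∈ W ∧ ∀ x ∈ W \ {v}, ∀ y ∈ A \ W, ¬G.Adj x y

theorem ConnectedComponent.isBranch_image_supp {A : Set V} (c : (G.induce A).ConnectedComponent)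
    {v : V} (hv : v ∈ Subtype.val '' c.supp) : G.IsBranch A (Subtype.val '' c.supp) v :=
  ⟨c.image_supp_subset, hv, fun _ hx _ hy hxy => hy.2 (c.mem_image_supp_of_adj hx.1 hy.1 hxy)⟩

theorem IsBranch.exists_isBranch_image_supp {A W : Set V} {v : V} (hG : G.IsAcyclic)
    (hW : G.IsBranch A W v) (c : (G.induce (W \ {v})).ConnectedComponent) :
    ∃ u, G.IsBranch A (Subtype.val '' c.supp) u := by
  set C := Subtype.val '' c.supp
  have hCW : C ⊆ W \ {v} := c.image_supp_subset
  obtain ⟨u, huC, hu⟩ : ∃ u ∈ C, ∀ x ∈ C, G.Adj x v → x = u := by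
    by_cases h : ∃ u ∈ C, G.Adj u v
    · obtain ⟨u, huC, huv⟩ := h
      exact ⟨u, huC, fun x hxC hxv => hG.eq_of_adj_of_preconnected_induce
        c.connected_induce_image_supp.preconnected (fun hv => (hCW hv).2 rfl) hxC huC hxv huv⟩
    · push Not at h
      obtain ⟨u, hu⟩ := c.nonempty_supp
      exact ⟨u, ⟨u, hu, rfl⟩, fun x hxC hxv => absurd hxv (h x hxC)⟩
  refine ⟨u, hCW.trans (Set.sdiff_subset.trans hW.1), huC, ?_⟩
  rintro x ⟨hxC, hxu⟩ y ⟨hyA, hyC⟩ hxy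
  by_cases hyv : y = v
  · exact hxu (hu x hxC (hyv ▸ hxy))
  by_cases hyW : y ∈ W
  · exact hyC (c.mem_image_supp_of_adj hxC ⟨hyW, hyv⟩ hxy)
  · exact hW.2.2 x (hCW hxC) y ⟨hyA, hyW⟩ hxy

end SimpleGraph

theorem Nat.sub_one_mul_le_mul_sub_one {k w : ℕ} (h : k ≤ w) : (k - 1) * w ≤ k * (w - 1) := by
  rcases k with _ | k
  · simp
  · obtain ⟨w, rfl⟩ : ∃ m, w = m + 1 := ⟨w - 1, by omega⟩
    simp only [add_tsub_cancel_right]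
    nlinarith

section GenKIndep

variable {V : Type*} [Finite V] {G : SimpleGraph V} {k : ℕ}

theorem isGenKIndep_iff {S : Set V} :
    IsGenKIndep G k S ↔ ∀ X ⊆ S, (G.induce X).Preconnected → X.ncard ≤ k - 1 := by
  refine ⟨fun h X hXS hX => ?_, fun h c => ?_⟩
  · obtain rfl | ⟨x₀, hx₀⟩ := X.eq_empty_or_nonempty
    · simp
    set c := (G.induce S).connectedComponentMk ⟨x₀, hXS hx₀⟩
    let f : X → c.supp := fun x => ⟨⟨x, hXS x.2⟩, ConnectedComponent.sound <|
      (hX x ⟨x₀, hx₀⟩).map (induceHomOfLE G hXS).toHom⟩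
    have hf : f.Injective := fun x y hxy => Subtype.ext (congrArg (·.1.1) hxy)
    rw [← Nat.card_coe_set_eq]
    exact (Nat.card_le_card_of_injective f hf).trans (h c)
  · rw [← c.ncard_image_supp]
    exact h _ c.image_supp_subset c.connected_induce_image_supp.preconnected

theorem IsGenKIndep.union {S T : Set V} (hS : IsGenKIndep G k S) (hT : IsGenKIndep G k T)
    (hST : ∀ x ∈ S, ∀ y ∈ T, ¬G.Adj x y) : IsGenKIndep G k (S ∪ T) := by
  rw [isGenKIndep_iff] at *
  intro X hX hXc
  rcases subset_or_subset_of_preconnected_induce hXc hX hST with h | h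
  exacts [hS X h hXc, hT X h hXc]

theorem ncard_le_alphaK {S : Set V} (hS : IsGenKIndep G k S) : S.ncard ≤ alphaK G k :=
  le_csSup ((Set.finite_range fun S : Set V => S.ncard).subset
    (by rintro _ ⟨S, -, rfl⟩; exact ⟨S, rfl⟩)).bddAbove ⟨S, hS, rfl⟩

theorem SimpleGraph.IsBranch.exists_isGenKIndep_sdiff {A W : Set V} {v : V}
    (hG : G.IsAcyclic) (hW : G.IsBranch A W v) (hk : k ≤ W.ncard) :
    ∃ W v, G.IsBranch A W v ∧ k ≤ W.ncard ∧ IsGenKIndep G k (W \ {v}) := by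
  obtain ⟨W, ⟨⟨v, hW⟩, hk⟩, hmin⟩ := exists_minimal_of_wellFoundedLT
    (fun W => (∃ v, G.IsBranch A W v) ∧ k ≤ W.ncard) ⟨W, ⟨v, hW⟩, hk⟩
  refine ⟨W, v, hW, hk, fun c => ?_⟩
  by_contra! hc
  obtain ⟨u, hu⟩ := hW.exists_isBranch_image_supp hG c
  have hWC := hmin ⟨⟨u, hu⟩, by rw [c.ncard_image_supp]; omega⟩
    (c.image_supp_subset.trans Set.sdiff_subset)
  exact (c.image_supp_subset (hWC hW.2.1)).2 rfl

variable (k) in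
theorem exists_isGenKIndep_subset (hG : G.IsAcyclic) (A : Set V) :
    ∃ S ⊆ A, IsGenKIndep G k S ∧ (k - 1) * A.ncard ≤ k * S.ncard := by
  induction A using WellFoundedLT.induction with
  | _ A ih =>
  by_cases hA : IsGenKIndep G k A
  · exact ⟨A, subset_rfl, hA, Nat.mul_le_mul_right _ (Nat.sub_le k 1)⟩
  obtain ⟨c, hc⟩ : ∃ c : (G.induce A).ConnectedComponent, k - 1 < Nat.card c.supp := by
    simpa [IsGenKIndep] using hA
  obtain ⟨v, hv⟩ := c.nonempty_supp
  have hck : k ≤ (Subtype.val '' c.supp).ncard := by rw [c.ncard_image_supp]; omega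
  obtain ⟨W, v, hW, hWk, hWS⟩ :=
    (c.isBranch_image_supp ⟨v, hv, rfl⟩).exists_isGenKIndep_sdiff hG hck
  obtain ⟨S, hSA, hS, hcard⟩ :=
    ih (A \ W) (Set.sdiff_ssubset_left_iff.2 ⟨v, hW.1 hW.2.1, hW.2.1⟩)
  refine ⟨W \ {v} ∪ S,
    Set.union_subset (Set.sdiff_subset.trans hW.1) (hSA.trans Set.sdiff_subset),
    hWS.union hS fun x hx y hy => hW.2.2 x hx y (hSA hy), ?_⟩
  have hdisj : Disjoint (W \ {v}) S := Set.disjoint_left.2 fun x hx hxS => (hSA hxS).2 hx.1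
  rw [Set.ncard_union_eq hdisj, Set.ncard_sdiff_singleton_of_mem hW.2.1,
    ← Set.ncard_sdiff_add_ncard_of_subset hW.1]
  have := Nat.sub_one_mul_le_mul_sub_one hWk
  rw [mul_add, mul_add]
  linarith

end GenKIndep

theorem alphaK_forest_lower_bound_general {V : Type*} [Fintype V] (F : SimpleGraph V)
    (hF : F.IsAcyclic) (k : ℕ) :
    ⌈((k : ℚ) - 1) / k * (Nat.card V)⌉ ≤ (alphaK F k : ℤ) := by
  obtain ⟨S, -, hS, hcard⟩ := exists_isGenKIndep_subset k hF Set.univ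
  rw [Set.ncard_univ] at hcard
  refine Int.ceil_le.2 (le_trans ?_ (by exact_mod_cast ncard_le_alphaK hS : (S.ncard : ℚ) ≤ _))
  rcases Nat.eq_zero_or_pos k with rfl | hk
  · simp
  rw [div_mul_eq_mul_div, div_le_iff₀ (by positivity)]
  have := (Nat.cast_le (α := ℚ)).2 hcard
  push_cast [Nat.cast_sub hk] at this
  linarith

/-- For every acyclic graph `F` on `n` vertices and `k ≥ 2`,
`α_k(F) ≥ ⌈((k-1)/k)·n⌉`. -/
theorem alphaK_forest_lower_bound {V : Type*} [Fintype V] (F : SimpleGraph V)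
    (hF : F.IsAcyclic) (k : ℕ) (hk : 2 ≤ k) :
    ⌈((k : ℚ) - 1) / k * (Nat.card V)⌉ ≤ (alphaK F k : ℤ) :=
  alphaK_forest_lower_bound_general F hF k
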